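/- arXiv:1402.2343 — 2 statements merged into one kernel-verified Lean document; each statement's English description precedes it below -/
import Mathlib

section
/- Let n, k, k̂ be integers with 1 ≤ k̂ ≤ k ≤ n − 1, set d = k and n̂ = k̂ + (n − k), and let P_{d̂} = C(n̂−1, d̂)·C(n−n̂, d−d̂)/C(n−1, d). Then ∑_{d̂=k̂}^{min{n̂−1, d}} (d̂/(d̂ − k̂ + 1))·P_{d̂} ≤ k̂, i.e., the average repair bandwidth γ of the new construction (in units of the per-node storage α) is at most the value k̂·α achieved by the prior constructions. Moreover the inequality is strict whenever 2 ≤ k̂ < k and n ≥ k + 2. -/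
/-- Vandermonde restricted: terms with `dh < kh` or `dh > kh + m` vanish. -/
lemma vand_restricted (k kh m : ℕ) (hkh : kh ≤ k) :
    ∑ dh ∈ Finset.Icc kh (min (kh + m) k),
      (kh + m).choose dh * (k - kh).choose (k - dh) = (k + m).choose k := by
  have h1 : (k + m).choose k = ((kh + m) + (k - kh)).choose k := by
    congr 1; omega
  rw [h1, Nat.add_choose_eq, Finset.Nat.sum_antidiagonal_eq_sum_range_succ_mk]
  apply Finset.sum_subset
  · intro x hx
    simp only [Finset.mem_Icc] at hx
    simp only [Finset.mem_range]
    omega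
  · intro x hx hx'
    simp only [Finset.mem_range] at hx
    simp only [Finset.mem_Icc, not_and_or, not_le] at hx'
    rcases hx' with h | h
    · have : (k - kh).choose (k - x) = 0 := Nat.choose_eq_zero_of_lt (by omega)
      simp [this]
    · have : (kh + m).choose x = 0 := Nat.choose_eq_zero_of_lt (by omega)
      simp [this]

lemma coeff_le (kh e : ℕ) (h1 : 1 ≤ kh) :
    ((kh + e : ℕ) : ℚ) / (((kh + e : ℕ) : ℚ) - (kh : ℚ) + 1) ≤ (kh : ℚ) := by
  have hd : (((kh + e : ℕ) : ℚ) - (kh : ℚ) + 1) = (e : ℚ) + 1 := by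
    push_cast; ring
  rw [hd, div_le_iff₀ (by positivity)]
  have h1' : (1 : ℚ) ≤ (kh : ℚ) := by exact_mod_cast h1
  have he : (0 : ℚ) ≤ (e : ℚ) := by positivity
  push_cast
  nlinarith

/-- For d = k and n̂ = k̂ + (n − k), the average repair bandwidth of the new construction
(in units of α), ∑_{d̂=k̂}^{min{n̂−1,d}} (d̂/(d̂−k̂+1))·P_{d̂}, is at most k̂, and strictly
less whenever 2 ≤ k̂ < k and n ≥ k + 2. -/
theorem new_construction_repair_bandwidth_le_prior (n k kh : ℕ)
    (h1 : 1 ≤ kh) (h2 : kh ≤ k) (h3 : k ≤ n - 1) :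
    ∀ d nh : ℕ, d = k → nh = kh + (n - k) →
    ∀ P : ℕ → ℚ,
      (∀ dh, P dh = (Nat.choose (nh - 1) dh * Nat.choose (n - nh) (d - dh) : ℚ) /
          (Nat.choose (n - 1) d : ℚ)) →
      (∑ dh ∈ Finset.Icc kh (min (nh - 1) d),
          ((dh : ℚ) / ((dh : ℚ) - (kh : ℚ) + 1)) * P dh ≤ (kh : ℚ)) ∧
      (2 ≤ kh → kh < k → k + 2 ≤ n →
        ∑ dh ∈ Finset.Icc kh (min (nh - 1) d),
          ((dh : ℚ) / ((dh : ℚ) - (kh : ℚ) + 1)) * P dh < (kh : ℚ)) := by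
  intro d nh hd hnh P hP
  obtain ⟨m, rfl⟩ : ∃ m, n = k + m + 1 := ⟨n - k - 1, by omega⟩
  subst hd
  have hnh1 : nh - 1 = kh + m := by omega
  have hnn : d + m + 1 - nh = d - kh := by omega
  have hn1 : d + m + 1 - 1 = d + m := by omega
  rw [hnh1]
  set S := Finset.Icc kh (min (kh + m) d) with hS
  have hD : (0 : ℚ) < ((d + m).choose d : ℚ) := by
    exact_mod_cast Nat.choose_pos (by omega)
  -- the sum of P over S is 1
  have hsum : ∑ dh ∈ S, P dh = 1 := by
    have h5 : ∑ dh ∈ S, P dh =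
        (∑ dh ∈ S, ((kh + m).choose dh * (d - kh).choose (d - dh) : ℕ) : ℚ)
          / ((d + m).choose d : ℚ) := by
      rw [Finset.sum_div]
      push_cast
      apply Finset.sum_congr rfl
      intro dh _
      rw [hP dh, hnh1, hnn, hn1]
    have h6 : (∑ dh ∈ S, ((kh + m).choose dh * (d - kh).choose (d - dh)) : ℕ)
        = (d + m).choose d := vand_restricted d kh m h2
    have h7 : (∑ dh ∈ S, (((kh + m).choose dh * (d - kh).choose (d - dh) : ℕ)) : ℚ)
        = ((d + m).choose d : ℚ) := by exact_mod_cast h6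
    rw [h5, h7, div_self (ne_of_gt hD)]
  have hP_nonneg : ∀ dh, 0 ≤ P dh := by
    intro dh
    rw [hP dh]
    positivity
  have hterm : ∀ dh ∈ S, ((dh : ℚ) / ((dh : ℚ) - (kh : ℚ) + 1)) * P dh
      ≤ (kh : ℚ) * P dh := by
    intro dh hdh
    simp only [hS, Finset.mem_Icc] at hdh
    obtain ⟨e, rfl⟩ : ∃ e, dh = kh + e := ⟨dh - kh, by omega⟩
    exact mul_le_mul_of_nonneg_right (coeff_le kh e h1) (hP_nonneg _)
  have hkh_sum : ∑ dh ∈ S, (kh : ℚ) * P dh = (kh : ℚ) := by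
    rw [← Finset.mul_sum, hsum, mul_one]
  constructor
  · calc ∑ dh ∈ S, ((dh : ℚ) / ((dh : ℚ) - (kh : ℚ) + 1)) * P dh
        ≤ ∑ dh ∈ S, (kh : ℚ) * P dh := Finset.sum_le_sum hterm
      _ = (kh : ℚ) := hkh_sum
  · intro hkh2 hkhk hnk2
    have hm1 : 1 ≤ m := by omega
    have hmem : kh + 1 ∈ S := by
      simp only [hS, Finset.mem_Icc]
      omega
    have hPpos : 0 < P (kh + 1) := by
      rw [hP (kh + 1), hnh1, hnn, hn1]
      have c1 : 0 < (kh + m).choose (kh + 1) := Nat.choose_pos (by omega)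
      have c2 : 0 < (d - kh).choose (d - (kh + 1)) := Nat.choose_pos (by omega)
      have c1' : (0 : ℚ) < ((kh + m).choose (kh + 1) : ℚ) := by exact_mod_cast c1
      have c2' : (0 : ℚ) < ((d - kh).choose (d - (kh + 1)) : ℚ) := by exact_mod_cast c2
      positivity
    have hstrict : (((kh + 1 : ℕ)) : ℚ) / ((((kh + 1 : ℕ)) : ℚ) - (kh : ℚ) + 1)
        * P (kh + 1) < (kh : ℚ) * P (kh + 1) := by
      apply mul_lt_mul_of_pos_right _ hPpos
      have hd2 : ((((kh + 1 : ℕ)) : ℚ) - (kh : ℚ) + 1) = 2 := by push_cast; ring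
      rw [hd2, div_lt_iff₀ (by norm_num)]
      have : (2 : ℚ) ≤ (kh : ℚ) := by exact_mod_cast hkh2
      push_cast
      linarith
    calc ∑ dh ∈ S, ((dh : ℚ) / ((dh : ℚ) - (kh : ℚ) + 1)) * P dh
        < ∑ dh ∈ S, (kh : ℚ) * P dh :=
          Finset.sum_lt_sum hterm ⟨kh + 1, hmem, hstrict⟩
      _ = (kh : ℚ) := hkh_sum
end

section
/- Let n, k, d, k̂ be integers with 1 ≤ k̂, k < d, d ≤ n − 1, and k ≤ n, and set n̂ = k̂ + (n − d) (so n̂ − k̂ = n − d and n̂ ≤ n). Define Q_ω = C(n̂, ω)·C(n−n̂, k−ω)/C(n, k). Then ∑_{ω=0}^{k} min{ω, k̂}·Q_ω < k̂; that is, the file size M_k of Construction 2 is strictly smaller than the file size k̂·α̂ of the underlying (n, d, d) code (taking α̂ = 1). -/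
/-- For d > k, taking n̂ = k̂ + (n − d) (so n̂ − k̂ = n − d and n̂ ≤ n) and
Q_ω = C(n̂,ω)·C(n−n̂,k−ω)/C(n,k), the file size of Construction 2 satisfies
∑_{ω=0}^{k} min{ω, k̂}·Q_ω < k̂ (with α̂ = 1). -/
theorem construction2_file_size_lt_underlying (n k d kh : ℕ)
    (h1 : 1 ≤ kh) (h2 : k < d) (h3 : d ≤ n - 1) (h4 : k ≤ n) :
    ∀ nh : ℕ, nh = kh + (n - d) → nh ≤ n →
    ∀ Q : ℕ → ℚ,
      (∀ ω, Q ω = (Nat.choose nh ω * Nat.choose (n - nh) (k - ω) : ℚ) /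
          (Nat.choose n k : ℚ)) →
      ∑ ω ∈ Finset.range (k + 1), (min ω kh : ℚ) * Q ω < (kh : ℚ) := by
  intro nh hnh hnhn Q hQ
  have hkd : kh ≤ d := by omega
  have hnnh : n - nh = d - kh := by omega
  -- Vandermonde: sum of numerators = choose n k
  have hvdm : ∑ ω ∈ Finset.range (k + 1),
      (Nat.choose nh ω * Nat.choose (n - nh) (k - ω)) = Nat.choose n k := by
    have := Nat.add_choose_eq nh (n - nh) k
    rw [Finset.Nat.sum_antidiagonal_eq_sum_range_succ_mk] at this
    have hnn : nh + (n - nh) = n := by omega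
    rw [hnn] at this
    exact this.symm
  have hck : 0 < (Nat.choose n k : ℚ) := by
    exact_mod_cast Nat.choose_pos h4
  have hsumQ : ∑ ω ∈ Finset.range (k + 1), Q ω = 1 := by
    simp only [hQ]
    rw [← Finset.sum_div]
    rw [div_eq_one_iff_eq (ne_of_gt hck)]
    exact_mod_cast hvdm
  -- choose a witness ω0 < kh with Q ω0 > 0
  set ω0 : ℕ := k - (d - kh) with hω0
  have hω0k : ω0 ≤ k := Nat.sub_le _ _
  have hω0kh : ω0 < kh := by omega
  have hω0nh : ω0 ≤ nh := by omega
  have hkω0 : k - ω0 ≤ n - nh := by omega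
  have hQpos : 0 < Q ω0 := by
    rw [hQ]
    apply div_pos _ hck
    have h5 : 0 < Nat.choose nh ω0 := Nat.choose_pos hω0nh
    have h6 : 0 < Nat.choose (n - nh) (k - ω0) := Nat.choose_pos hkω0
    positivity
  have hQnonneg : ∀ ω, 0 ≤ Q ω := by
    intro ω
    rw [hQ]
    positivity
  have key : ∑ ω ∈ Finset.range (k + 1), (min ω kh : ℚ) * Q ω <
      ∑ ω ∈ Finset.range (k + 1), (kh : ℚ) * Q ω := by
    apply Finset.sum_lt_sum
    · intro i _
      apply mul_le_mul_of_nonneg_right _ (hQnonneg i)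
      exact_mod_cast Nat.cast_le.mpr (min_le_right i kh)
    · refine ⟨ω0, Finset.mem_range.mpr (by omega), ?_⟩
      apply mul_lt_mul_of_pos_right _ hQpos
      exact lt_of_le_of_lt (min_le_left _ _) (by exact_mod_cast hω0kh)
  calc ∑ ω ∈ Finset.range (k + 1), (min ω kh : ℚ) * Q ω
      < ∑ ω ∈ Finset.range (k + 1), (kh : ℚ) * Q ω := key
    _ = (kh : ℚ) * ∑ ω ∈ Finset.range (k + 1), Q ω := by rw [Finset.mul_sum]
    _ = kh := by rw [hsumQ, mul_one]
end
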